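/- Let K be a field, a, b integers with 2 ≤ a ≤ b and g = gcd(a,b), and let j be an integer with 1 ≤ j ≤ g − 2. Let A = {0, 1, …, g−j−1} ∪ {g−1, g} and I = I_A. Then the least integer k ≥ 1 such that (I^k)² = (x^{ka}, y^{kb})·I^k is exactly j; that is, the reduction number of I^k with respect to (x^{ka}, y^{kb}) equals 1 for k = j and is different from 1 for all 1 ≤ k < j. -/

import Mathlib

/-!
Divide all exponents by `(a / g, b / g)`. Then the monomial generators of `I_A ^ n` and of
`(x^{na}, y^{nb}) * I_A ^ n` are points of the antidiagonal `u + v = n g`, where no point dominates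
another, so identities between these ideals are identities between sumsets of
`A' = {(i, g - i) | i ∈ A}`. Since `A` contains `[0, g - j - 1]` and `g - 1, g`, the `j`-fold
sumset of `A'` is the whole antidiagonal `u + v = j g`, and the reduction number of `I_A ^ j` is
one. For `k < j` every point of the `k`-fold sumset has second coordinate at most `k` or above
`j`, so the point of the `2k`-fold sumset with second coordinate `k + 1` is not a corner
`(k g, 0)`, `(0, k g)` plus a point of the `k`-fold sumset.
-/

open MvPolynomial

/-- The monomial `x^c y^d` in `K[x,y]`. -/
noncomputable def mono (K : Type*) [Field K] (c d : ℕ) : MvPolynomial (Fin 2) K :=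
  X 0 ^ c * X 1 ^ d

/-- The ideal `J = (x^a, y^b)`. -/
noncomputable def Jab (K : Type*) [Field K] (a b : ℕ) : Ideal (MvPolynomial (Fin 2) K) :=
  Ideal.span {mono K a 0, mono K 0 b}

/-- For `A ⊆ {0,…,g}` with `g = gcd(a,b)`, the ideal `I_A` generated by the
monomials `x^(i·(a/g)) y^(b − i·(b/g))` for `i ∈ A`. -/
noncomputable def IA (K : Type*) [Field K] (a b : ℕ) (A : Finset ℕ) :
    Ideal (MvPolynomial (Fin 2) K) :=
  Ideal.span ((fun i : ℕ =>
    mono K (i * (a / Nat.gcd a b)) (b - i * (b / Nat.gcd a b))) '' (A : Set ℕ))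

open Pointwise

section SumSets

lemma Icc_mul_subset_nsmul {A : Set ℕ} {a b : ℕ} (h : Set.Icc a b ⊆ A) (n : ℕ) :
    Set.Icc (n * a) (n * b) ⊆ n • A := by
  induction n with
  | zero => intro s hs; simp_all
  | succ n ih =>
    rintro s ⟨hs₁, hs₂⟩
    have hab : a ≤ b := Nat.le_of_mul_le_mul_left (hs₁.trans hs₂) n.succ_pos
    have hnab : n * a ≤ n * b := Nat.mul_le_mul_left n hab
    rw [Nat.succ_mul] at hs₁ hs₂
    rw [succ_nsmul, Set.mem_add]
    by_cases hsa : s ≤ n * b + a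
    · exact ⟨s - a, ih ⟨by omega, by omega⟩, a, h ⟨le_rfl, hab⟩, by omega⟩
    · exact ⟨n * b, ih ⟨hnab, le_rfl⟩, s - n * b, h ⟨by omega, by omega⟩, by omega⟩

lemma Icc_zero_mul_subset_nsmul {A : Set ℕ} {g n : ℕ} (hn : n + 2 ≤ g)
    (hsmall : Set.Icc 0 (g - n - 1) ⊆ A) (hbig : Set.Icc (g - 1) g ⊆ A) :
    Set.Icc 0 (n * g) ⊆ n • A := by
  rintro s ⟨-, hs⟩
  obtain ⟨p, hpn, hp_low, hp_high⟩ :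
      ∃ p ≤ n, p * (g - 1) ≤ s ∧ (p = n ∨ s < (p + 1) * (g - 1)) := by
    refine ⟨min n (s / (g - 1)), min_le_left _ _,
      (Nat.mul_le_mul_right _ (min_le_right _ _)).trans (Nat.div_mul_le_self s (g - 1)), ?_⟩
    rcases min_choice n (s / (g - 1)) with h | h <;> rw [h]
    · exact .inl rfl
    · right; rw [mul_comm]; exact Nat.lt_mul_div_succ s (by omega)
  have hpg : p * g = p * (g - 1) + p := by
    rw [← Nat.mul_add_one]; congr 1; omega
  -- the `n - p` summands from `[0, g - n - 1]` absorb what the `p` summands from `[g - 1, g]` miss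
  have hslack : p < n → g - p - 2 ≤ (n - p) * (g - n - 1) := by
    intro hpn
    have : (n - p - 1) * 1 ≤ (n - p - 1) * (g - n - 1) := Nat.mul_le_mul_left _ (by omega)
    rw [show n - p = n - p - 1 + 1 by omega, Nat.succ_mul]
    omega
  rw [← Nat.add_sub_cancel' hpn, add_nsmul]
  refine ⟨min s (p * g), Icc_mul_subset_nsmul hbig p ⟨?_, min_le_right _ _⟩,
    s - min s (p * g), Icc_mul_subset_nsmul hsmall (n - p) ⟨Nat.zero_le _, ?_⟩,
    Nat.add_sub_cancel' (min_le_left _ _)⟩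
  · exact le_min hp_low (Nat.mul_le_mul_left _ (Nat.sub_le _ _))
  · rcases hpn.lt_or_eq with hpn | rfl
    · have hs' := hp_high.resolve_left hpn.ne
      rw [Nat.succ_mul] at hs'
      have := hslack hpn
      omega
    · omega

end SumSets

section Antidiagonals

lemma add_subset_antidiagonal {S T : Set (ℕ × ℕ)} {d e : ℕ}
    (hS : S ⊆ {p | p.1 + p.2 = d}) (hT : T ⊆ {p | p.1 + p.2 = e}) :
    S + T ⊆ {p | p.1 + p.2 = d + e} := by
  rintro _ ⟨s, hs, t, ht, rfl⟩
  have hs' : s.1 + s.2 = d := hS hs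
  have ht' : t.1 + t.2 = e := hT ht
  simp only [Set.mem_ofPred_eq, Prod.fst_add, Prod.snd_add]
  omega

lemma nsmul_subset_antidiagonal {S : Set (ℕ × ℕ)} {d : ℕ} (hS : S ⊆ {p | p.1 + p.2 = d})
    (n : ℕ) : n • S ⊆ {p | p.1 + p.2 = n * d} := by
  induction n with
  | zero => rintro p rfl; simp
  | succ n ih => rw [succ_nsmul, Nat.succ_mul]; exact add_subset_antidiagonal ih hS

/-- On an antidiagonal a point is determined by its first coordinate. -/
lemma antidiagonal_subset_nsmul {S : Set (ℕ × ℕ)} {d n : ℕ} (hS : S ⊆ {p | p.1 + p.2 = d})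
    (h : Set.Icc 0 (n * d) ⊆ n • (Prod.fst '' S)) : {p | p.1 + p.2 = n * d} ⊆ n • S := by
  intro p hp
  rw [Set.mem_ofPred_eq] at hp
  rw [← AddMonoidHom.coe_fst, ← Set.image_nsmul] at h
  obtain ⟨q, hq, hqp⟩ := h (show p.1 ∈ Set.Icc 0 (n * d) from ⟨Nat.zero_le _, by omega⟩)
  have hq' : q.1 + q.2 = n * d := nsmul_subset_antidiagonal hS n hq
  rw [AddMonoidHom.coe_fst] at hqp
  convert hq
  ext <;> omega

lemma antidiagonal_add_antidiagonal (d : ℕ) :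
    {p : ℕ × ℕ | p.1 + p.2 = d} + {p | p.1 + p.2 = d} =
      {(d, 0), (0, d)} + {p | p.1 + p.2 = d} := by
  refine subset_antisymm ?_ (Set.add_subset_add_right (by simp [Set.insert_subset_iff]))
  rintro _ ⟨p, hp, q, hq, rfl⟩
  simp only [Set.mem_ofPred_eq] at hp hq
  by_cases h : d ≤ p.1 + q.1
  · refine ⟨(d, 0), by simp, (p.1 + q.1 - d, p.2 + q.2), ?_, ?_⟩ <;>
      simp only [Set.mem_ofPred_eq, Prod.ext_iff, Prod.fst_add, Prod.snd_add] <;> omega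
  · refine ⟨(0, d), by simp, (p.1 + q.1, p.2 + q.2 - d), ?_, ?_⟩ <;>
      simp only [Set.mem_ofPred_eq, Prod.ext_iff, Prod.fst_add, Prod.snd_add] <;> omega

lemma snd_le_or_lt_of_mem_nsmul {S : Set (ℕ × ℕ)} {m : ℕ} (hS : ∀ q ∈ S, q.2 ≤ 1 ∨ m < q.2)
    (n : ℕ) : ∀ p ∈ n • S, p.2 ≤ n ∨ m < p.2 := by
  induction n with
  | zero => rintro p rfl; simp
  | succ n ih =>
    rw [succ_nsmul]
    rintro _ ⟨p, hp, q, hq, rfl⟩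
    have := ih p hp
    have := hS q hq
    simp only [Prod.snd_add]
    omega

end Antidiagonals

noncomputable def monomialIdeal (K : Type*) [Field K] (α β : ℕ) (S : Set (ℕ × ℕ)) :
    Ideal (MvPolynomial (Fin 2) K) :=
  Ideal.span ((fun p => mono K (p.1 * α) (p.2 * β)) '' S)

section MonomialIdeal

variable {K : Type*} [Field K] {α β : ℕ}

lemma mono_mul_mono (c d e f : ℕ) : mono K c d * mono K e f = mono K (c + e) (d + f) := by
  simp only [mono, pow_add]
  ring

lemma mono_eq_monomial (c d : ℕ) :
    mono K c d = monomial (Finsupp.single 0 c + Finsupp.single 1 d) 1 := by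
  rw [mono, X_pow_eq_monomial, X_pow_eq_monomial, monomial_mul, one_mul]

lemma monomialIdeal_mul (S T : Set (ℕ × ℕ)) :
    monomialIdeal K α β S * monomialIdeal K α β T = monomialIdeal K α β (S + T) := by
  rw [monomialIdeal, monomialIdeal, monomialIdeal, Ideal.span_mul_span', ← Set.image2_mul,
    Set.image2_image_left, Set.image2_image_right, ← Set.image2_add, Set.image_image2]
  congr 1
  refine Set.image2_congr fun p _ q _ => ?_
  simp only [mono_mul_mono, Prod.fst_add, Prod.snd_add, add_mul]

lemma monomialIdeal_pow (S : Set (ℕ × ℕ)) (n : ℕ) :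
    monomialIdeal K α β S ^ n = monomialIdeal K α β (n • S) := by
  induction n with
  | zero =>
    rw [pow_zero, zero_nsmul, Ideal.one_eq_top, eq_comm, Ideal.eq_top_iff_one]
    exact Ideal.subset_span ⟨0, rfl, by simp [mono]⟩
  | succ n ih => rw [pow_succ, ih, monomialIdeal_mul, succ_nsmul]

lemma mono_mem_monomialIdeal_iff (hα : 0 < α) (hβ : 0 < β) (S : Set (ℕ × ℕ)) (p : ℕ × ℕ) :
    mono K (p.1 * α) (p.2 * β) ∈ monomialIdeal K α β S ↔ ∃ s ∈ S, s ≤ p := by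
  classical
  simp only [monomialIdeal, mono_eq_monomial]
  rw [← Set.image_image (fun e => monomial e (1 : K)), mem_ideal_span_monomial_image,
    support_monomial, if_neg one_ne_zero]
  simp [Finsupp.le_def, Fin.forall_fin_two, Prod.le_def, Nat.mul_le_mul_right_iff hα,
    Nat.mul_le_mul_right_iff hβ]

/-- Distinct points of one antidiagonal are incomparable, so no generator divides another. -/
lemma subset_of_monomialIdeal_le (hα : 0 < α) (hβ : 0 < β) {d : ℕ} {S T : Set (ℕ × ℕ)}
    (hS : S ⊆ {p | p.1 + p.2 = d}) (hT : T ⊆ {p | p.1 + p.2 = d})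
    (h : monomialIdeal K α β S ≤ monomialIdeal K α β T) : S ⊆ T := by
  intro p hp
  obtain ⟨t, ht, htp⟩ := (mono_mem_monomialIdeal_iff hα hβ T p).1
    (h ((mono_mem_monomialIdeal_iff hα hβ S p).2 ⟨p, hp, le_rfl⟩))
  have hp' : p.1 + p.2 = d := hS hp
  have ht' : t.1 + t.2 = d := hT ht
  rw [Prod.le_def] at htp
  convert ht
  ext <;> omega

lemma monomialIdeal_injOn (hα : 0 < α) (hβ : 0 < β) {d : ℕ} {S T : Set (ℕ × ℕ)}
    (hS : S ⊆ {p | p.1 + p.2 = d}) (hT : T ⊆ {p | p.1 + p.2 = d})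
    (h : monomialIdeal K α β S = monomialIdeal K α β T) : S = T :=
  (subset_of_monomialIdeal_le hα hβ hS hT h.le).antisymm
    (subset_of_monomialIdeal_le hα hβ hT hS h.ge)

lemma IA_eq_monomialIdeal (a b : ℕ) (A : Finset ℕ) :
    IA K a b A = monomialIdeal K (a / Nat.gcd a b) (b / Nat.gcd a b)
      ((fun i => (i, Nat.gcd a b - i)) '' A) := by
  simp only [IA, monomialIdeal, Set.image_image, Nat.sub_mul,
    Nat.mul_div_cancel' (Nat.gcd_dvd_right a b)]

lemma Jab_eq_monomialIdeal (a b k : ℕ) :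
    Jab K (k * a) (k * b) = monomialIdeal K (a / Nat.gcd a b) (b / Nat.gcd a b)
      {(k * Nat.gcd a b, 0), (0, k * Nat.gcd a b)} := by
  rw [Jab, monomialIdeal, Set.image_pair, mul_assoc, mul_assoc,
    Nat.mul_div_cancel' (Nat.gcd_dvd_left a b), Nat.mul_div_cancel' (Nat.gcd_dvd_right a b),
    zero_mul, zero_mul]

end MonomialIdeal

/-- The exponent vectors of the generators of `I_A` for `A = [0, g - j) ∪ {g - 1, g}`, in units
of `(a / g, b / g)`. -/
def genPoints (g j : ℕ) : Set (ℕ × ℕ) :=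
  (fun i => (i, g - i)) '' ↑(Finset.range (g - j) ∪ ({g - 1, g} : Finset ℕ))

section GenPoints

variable {g j : ℕ}

lemma mem_range_union_pair {i : ℕ} :
    i ∈ (↑(Finset.range (g - j) ∪ ({g - 1, g} : Finset ℕ)) : Set ℕ) ↔
      i < g - j ∨ i = g - 1 ∨ i = g := by
  simp only [Finset.coe_union, Finset.coe_range, Finset.coe_insert, Finset.coe_singleton,
    Set.mem_union, Set.mem_Iio, Set.mem_insert_iff, Set.mem_singleton_iff]

lemma genPoints_subset_antidiagonal : genPoints g j ⊆ {p | p.1 + p.2 = g} := by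
  rintro _ ⟨i, hi, rfl⟩
  rw [mem_range_union_pair] at hi
  simp only [Set.mem_ofPred_eq]
  omega

lemma snd_le_one_or_lt_of_mem_genPoints : ∀ q ∈ genPoints g j, q.2 ≤ 1 ∨ j < q.2 := by
  rintro _ ⟨i, hi, rfl⟩
  rw [mem_range_union_pair] at hi
  dsimp only
  omega

lemma nsmul_genPoints (hg : j + 2 ≤ g) : j • genPoints g j = {p | p.1 + p.2 = j * g} := by
  refine (nsmul_subset_antidiagonal genPoints_subset_antidiagonal j).antisymm
    (antidiagonal_subset_nsmul genPoints_subset_antidiagonal ?_)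
  rw [genPoints, Set.image_image, Set.image_id']
  refine Icc_zero_mul_subset_nsmul hg ?_ ?_ <;> intro x ⟨hx₁, hx₂⟩ <;>
    rw [mem_range_union_pair] <;> omega

lemma nsmul_genPoints_add_self (hg : j + 2 ≤ g) :
    j • genPoints g j + j • genPoints g j = {(j * g, 0), (0, j * g)} + j • genPoints g j := by
  rw [nsmul_genPoints hg, antidiagonal_add_antidiagonal]

lemma nsmul_genPoints_ne_corners (hj : 1 ≤ j) (hg : j + 2 ≤ g) :
    j • genPoints g j ≠ {(j * g, 0), (0, j * g)} := by
  have hjg : 3 ≤ j * g := by nlinarith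
  intro h
  have hmem : (1, j * g - 1) ∈ j • genPoints g j := by
    rw [nsmul_genPoints hg]; simp only [Set.mem_ofPred_eq]; omega
  rw [h] at hmem
  simp only [Set.mem_insert_iff, Set.mem_singleton_iff, Prod.mk.injEq] at hmem
  omega

lemma nsmul_genPoints_add_self_ne {k : ℕ} (hk : 1 ≤ k) (hkj : k < j) (hg : j + 2 ≤ g) :
    k • genPoints g j + k • genPoints g j ≠ {(k * g, 0), (0, k * g)} + k • genPoints g j := by
  have hgen₁ : (g - 1, 1) ∈ genPoints g j := ⟨g - 1, by simp, Prod.ext rfl (by dsimp only; omega)⟩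
  have hgen₀ : (g, 0) ∈ genPoints g j := ⟨g, by simp, by simp⟩
  -- a point with second coordinate `k + 1`, in the gap left by `snd_le_or_lt_of_mem_nsmul`
  have hq : k • (g - 1, 1) + ((k - 1) • (g, 0) + (g - 1, 1)) ∈
      k • genPoints g j + k • genPoints g j := by
    refine Set.add_mem_add (Set.nsmul_mem_nsmul hgen₁) ?_
    rw [← Nat.sub_add_cancel hk, succ_nsmul]
    exact Set.add_mem_add (Set.nsmul_mem_nsmul hgen₀) hgen₁
  intro h
  rw [h] at hq
  obtain ⟨e, he, r, hr, hsum⟩ := hq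
  have hsnd := congrArg Prod.snd hsum
  simp only [Prod.snd_add, Prod.smul_snd, smul_eq_mul, mul_one, mul_zero, zero_add] at hsnd
  have hkg : 3 * k ≤ k * g := by nlinarith
  have := snd_le_or_lt_of_mem_nsmul snd_le_one_or_lt_of_mem_genPoints k r hr
  simp only [Set.mem_insert_iff, Set.mem_singleton_iff] at he
  rcases he with rfl | rfl <;> simp only at hsnd <;> omega

end GenPoints

theorem stmt18 (K : Type*) [Field K] (a b : ℕ) (ha : 2 ≤ a) (hab : a ≤ b)
    (j : ℕ) (hj1 : 1 ≤ j) (hj2 : j ≤ Nat.gcd a b - 2) :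
    let g := Nat.gcd a b
    let I := IA K a b (Finset.range (g - j) ∪ ({g - 1, g} : Finset ℕ))
    ((I ^ j) ^ 2 = Jab K (j * a) (j * b) * I ^ j ∧ I ^ j ≠ Jab K (j * a) (j * b))
    ∧ ∀ k : ℕ, 1 ≤ k → k < j → (I ^ k) ^ 2 ≠ Jab K (k * a) (k * b) * I ^ k := by
  intro g I
  have hg : j + 2 ≤ g := by omega
  have hα : 0 < a / g := Nat.div_pos (Nat.gcd_le_left b (by omega)) (by omega)
  have hβ : 0 < b / g := Nat.div_pos (Nat.gcd_le_right a (by omega)) (by omega)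
  have hI : ∀ k, I ^ k = monomialIdeal K (a / g) (b / g) (k • genPoints g j) := fun k => by
    rw [← monomialIdeal_pow]
    exact congrArg (· ^ k) (IA_eq_monomialIdeal a b _)
  have hsq : ∀ k, (I ^ k) ^ 2 =
      monomialIdeal K (a / g) (b / g) (k • genPoints g j + k • genPoints g j) := fun k => by
    rw [hI, sq, monomialIdeal_mul]
  have hJI : ∀ k, Jab K (k * a) (k * b) * I ^ k =
      monomialIdeal K (a / g) (b / g) ({(k * g, 0), (0, k * g)} + k • genPoints g j) :=
    fun k => by rw [hI, Jab_eq_monomialIdeal, monomialIdeal_mul]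
  have hpts : ∀ k, k • genPoints g j ⊆ {p | p.1 + p.2 = k * g} :=
    nsmul_subset_antidiagonal genPoints_subset_antidiagonal
  have hcorners : ∀ k, {(k * g, 0), (0, k * g)} ⊆ {p : ℕ × ℕ | p.1 + p.2 = k * g} :=
    fun k => by simp [Set.insert_subset_iff]
  refine ⟨⟨?_, fun h => ?_⟩, fun k hk hkj h => ?_⟩
  · rw [hsq, hJI, nsmul_genPoints_add_self hg]
  · rw [hI, Jab_eq_monomialIdeal] at h
    exact nsmul_genPoints_ne_corners hj1 hg (monomialIdeal_injOn hα hβ (hpts j) (hcorners j) h)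
  · rw [hsq, hJI] at h
    exact nsmul_genPoints_add_self_ne hk hkj hg (monomialIdeal_injOn hα hβ
      (add_subset_antidiagonal (hpts k) (hpts k)) (add_subset_antidiagonal (hcorners k) (hpts k)) h)
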